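/- arXiv:math/0207204 — 2 statements merged into one kernel-verified Lean document; each statement's English description precedes it below -/
import Mathlib

section
/- For every natural number n ≥ 0, with T_10 = {12̄, 1̄2, 21̄}, one has b_n(T_10) = Σ_{j=0}^{n} j!·(n−j)!, equivalently b_n(T_10) = n!·Σ_{j=0}^{n} C(n,j)^{-1}, the factorial times the sum of the reciprocals of the binomial coefficients. -/
/-- A signed permutation of length `n`: a permutation of `Fin n` (the absolute
values) together with a sign (bar) for each position. -/
abbrev SignedPerm (n : ℕ) := Equiv.Perm (Fin n) × (Fin n → Bool)

/-- `α` contains the signed pattern `τ`. -/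
def SPContains {n k : ℕ} (α : SignedPerm n) (τ : SignedPerm k) : Prop :=
  ∃ f : Fin k → Fin n, StrictMono f ∧
    (∀ p q : Fin k, τ.1 p < τ.1 q ↔ α.1 (f p) < α.1 (f q)) ∧
    ∀ j : Fin k, α.2 (f j) = τ.2 j

/-- `α` avoids every pattern in `T`. -/
def AvoidsAll {n k : ℕ} (T : Set (SignedPerm k)) (α : SignedPerm n) : Prop :=
  ∀ τ ∈ T, ¬ SPContains α τ

/-- `bn n T` is the number of signed permutations in `B_n` avoiding all patterns of `T`. -/
noncomputable def bn (n : ℕ) (T : Set (SignedPerm 2)) : ℕ :=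
  Nat.card {α : SignedPerm n // AvoidsAll T α}

def p12   : SignedPerm 2 := (Equiv.refl (Fin 2), ![false, false])
def p21   : SignedPerm 2 := (Equiv.swap 0 1,     ![false, false])
def p12b  : SignedPerm 2 := (Equiv.refl (Fin 2), ![false, true])
def p1b2  : SignedPerm 2 := (Equiv.refl (Fin 2), ![true, false])
def p21b  : SignedPerm 2 := (Equiv.swap 0 1,     ![false, true])
def p2b1  : SignedPerm 2 := (Equiv.swap 0 1,     ![true, false])
def p1b2b : SignedPerm 2 := (Equiv.refl (Fin 2), ![true, true])
def p2b1b : SignedPerm 2 := (Equiv.swap 0 1,     ![true, true])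

/-!
A signed permutation `(σ, b)` avoids `12̄`, `1̄2` and `21̄` exactly when its barred positions form
a prefix of some length `j` and every barred entry exceeds every unbarred one, i.e. `σ` maps the
first `j` positions onto the `j` largest values. For fixed `j` there are `j! (n - j)!` such
permutations, and `j! (n - j)! = n! / C(n, j)`.
-/

open Finset Nat

theorem Fin.card_filter_le_val (n j : ℕ) : #{x : Fin n | j ≤ x.val} = n - j := by
  simp_rw [← not_lt, filter_not, card_sdiff, inter_univ]
  rw [Fin.card_filter_val_lt, Finset.card_univ, Fintype.card_fin]
  omega

theorem Fin.perm_prefix_gt_suffix_iff {n j : ℕ} (σ : Equiv.Perm (Fin n)) :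
    (∀ i k : Fin n, i.val < j → j ≤ k.val → σ k < σ i) ↔
      ∀ x : Fin n, x.val < j ↔ n - j ≤ (σ x).val := by
  constructor
  · intro hblock x
    -- `σ` sends the positions `≥ j` onto a down-set of `n - j` values, i.e. onto `{v | v < n - j}`
    have hlower : ∀ v w : Fin n, w ≤ v → j ≤ (σ.symm v).val → j ≤ (σ.symm w).val :=
      fun v w hwv hv => by
        by_contra! hw
        exact hwv.not_gt (by simpa using hblock _ _ hw hv)
    have hcard : #{v : Fin n | j ≤ (σ.symm v).val} = n - j := by
      rw [card_equiv σ.symm (t := {x : Fin n | j ≤ x.val}) (by simp), Fin.card_filter_le_val]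
    have := Fin.lt_card_filter_univ_iff_apply_of_imp _ hlower (j := σ x)
    simp only [hcard, Equiv.symm_apply_apply] at this
    omega
  · intro hsplit i k hi hk
    have := (hsplit i).mp hi
    have := (hsplit k).not.mp (by omega)
    rw [Fin.lt_def]
    omega

theorem Fin.eq_true_iff_lt_card_of_prefix {n : ℕ} {b : Fin n → Bool}
    (hprefix : ∀ i k, i < k → b k = true → b i = true) (i : Fin n) :
    b i = true ↔ i.val < #{i | b i = true} :=
  (Fin.lt_card_filter_univ_iff_apply_of_imp _
    fun k i hik => hik.lt_or_eq.elim (hprefix i k) fun h => h ▸ id).symm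

namespace Equiv.Perm

variable {α : Type*} {p q : α → Prop} [DecidablePred p] [DecidablePred q]

def subtypeIffEquivProd :
    {e : Perm α // ∀ a, p a ↔ q (e a)} ≃
      ({a // p a} ≃ {a // q a}) × ({a // ¬p a} ≃ {a // ¬q a}) where
  toFun e := (e.1.subtypeEquiv e.2, e.1.subtypeEquiv fun a => not_congr (e.2 a))
  invFun f := ⟨Equiv.subtypeCongr f.1 f.2, fun a => by
    by_cases h : p a
    · simpa [Equiv.subtypeCongr, h] using (f.1 ⟨a, h⟩).2
    · simpa [Equiv.subtypeCongr, h] using (f.2 ⟨a, h⟩).2⟩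
  left_inv e := by ext a; by_cases h : p a <;> simp [Equiv.subtypeCongr, h]
  right_inv f := by ext a <;> simp [Equiv.subtypeCongr, a.2]

theorem card_subtype_forall_iff_apply [Finite α] (h : Nat.card {a // p a} = Nat.card {a // q a}) :
    Nat.card {e : Perm α // ∀ a, p a ↔ q (e a)} =
      (Nat.card {a // p a})! * (Nat.card {a // ¬p a})! := by
  have := Fintype.ofFinite α
  classical
  simp only [Nat.card_eq_fintype_card] at h ⊢
  rw [Fintype.card_congr subtypeIffEquivProd, Fintype.card_prod,
    Fintype.card_equiv (Fintype.equivOfCardEq h),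
    Fintype.card_equiv (Fintype.equivOfCardEq (Fintype.card_compl_eq_card_compl p q h))]

end Equiv.Perm

theorem spContains_two_iff {n : ℕ} (α : SignedPerm n) (τ : SignedPerm 2) :
    SPContains α τ ↔ ∃ i k, i < k ∧ (τ.1 0 < τ.1 1 ↔ α.1 i < α.1 k) ∧
      α.2 i = τ.2 0 ∧ α.2 k = τ.2 1 := by
  constructor
  · rintro ⟨f, hf, hord, hsign⟩
    exact ⟨f 0, f 1, hf Fin.zero_lt_one, hord 0 1, hsign 0, hsign 1⟩
  · rintro ⟨i, k, hik, hord, hi, hk⟩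
    have hflip : τ.1 1 < τ.1 0 ↔ α.1 k < α.1 i := by
      have hτ : τ.1 0 ≠ τ.1 1 := τ.1.injective.ne (by decide)
      have hα : α.1 i ≠ α.1 k := α.1.injective.ne hik.ne
      constructor <;> intro h
      · exact (lt_or_gt_of_ne hα).resolve_left fun h' => lt_asymm h (hord.mpr h')
      · exact (lt_or_gt_of_ne hτ).resolve_left fun h' => lt_asymm h (hord.mp h')
    refine ⟨![i, k], ?_, ?_, ?_⟩
    · intro a b hab
      fin_cases a <;> fin_cases b <;> simp_all
    · intro a b
      fin_cases a <;> fin_cases b <;> simp [hord, hflip]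
    · intro a
      fin_cases a <;> simp [hi, hk]

theorem avoidsAll_p12b_p1b2_p21b_iff {n : ℕ} (σ : Equiv.Perm (Fin n)) (b : Fin n → Bool) :
    AvoidsAll {p12b, p1b2, p21b} (σ, b) ↔
      (∀ i k, i < k → b k = true → b i = true) ∧
      (∀ i k, i < k → b i = true → b k = false → σ k < σ i) := by
  have hne : ∀ i k, i < k → σ i ≠ σ k := fun i k hik => σ.injective.ne hik.ne
  simp only [AvoidsAll, Set.mem_insert_iff, Set.mem_singleton_iff, forall_eq_or_imp, forall_eq,
    spContains_two_iff, p12b, p1b2, p21b, Equiv.refl_apply, Equiv.swap_apply_left,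
    Equiv.swap_apply_right, Matrix.cons_val_zero, Matrix.cons_val_one, zero_lt_one,
    _root_.not_lt_zero, true_iff, false_iff, not_lt, not_exists, not_and, Bool.not_eq_true,
    Bool.not_eq_false]
  constructor
  · rintro ⟨h12b, h1b2, h21b⟩
    refine ⟨fun i k hik hk => ?_, fun i k hik hi hk => ?_⟩
    · by_contra hi
      rcases (hne i k hik).lt_or_gt with h | h
      · simp_all [h12b i k hik h]
      · simp_all [h21b i k hik h.le]
    · exact ((hne i k hik).lt_or_gt).resolve_left fun h => by simp_all [h1b2 i k hik h]
  · rintro ⟨hprefix, hblock⟩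
    have hbarred : ∀ i k, i < k → b i = false → b k = false := fun i k hik hi => by
      simpa [hi] using mt (hprefix i k hik)
    refine ⟨fun i k hik _ => hbarred i k hik, fun i k hik hlt hi => ?_,
      fun i k hik _ => hbarred i k hik⟩
    by_contra hk
    exact lt_asymm hlt (hblock i k hik hi (by simpa using hk))

def avoidsAllEquivPrefixPerm (n : ℕ) :
    {α : SignedPerm n // AvoidsAll {p12b, p1b2, p21b} α} ≃
      {x : Fin (n + 1) × Equiv.Perm (Fin n) //
        ∀ i : Fin n, i.val < x.1 ↔ n - x.1 ≤ (x.2 i).val} where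
  toFun
    | ⟨(σ, b), hα⟩ => ⟨(⟨#{i | b i = true}, Nat.lt_succ_of_le (card_finset_fin_le _)⟩, σ), by
      obtain ⟨hprefix, hblock⟩ := (avoidsAll_p12b_p1b2_p21b_iff σ b).mp hα
      have hbar := Fin.eq_true_iff_lt_card_of_prefix hprefix
      refine (Fin.perm_prefix_gt_suffix_iff σ).mp
        fun i k (hi : i.val < #{i | b i = true}) (hk : #{i | b i = true} ≤ k.val) => ?_
      exact hblock i k (Fin.lt_def.mpr (by omega)) ((hbar i).mpr hi)
        (by simpa using (hbar k).not.mpr (by omega))⟩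
  invFun x := ⟨(x.1.2, fun i => decide (i.val < x.1.1)), (avoidsAll_p12b_p1b2_p21b_iff _ _).mpr
    ⟨fun i k hik hk => by simp only [decide_eq_true_eq] at hk ⊢; omega,
     fun i k hik hi hk => (Fin.perm_prefix_gt_suffix_iff _).mpr x.2 i k (by simpa using hi)
       (by simpa using hk)⟩⟩
  left_inv := by
    rintro ⟨⟨σ, b⟩, hα⟩
    have hbar := Fin.eq_true_iff_lt_card_of_prefix ((avoidsAll_p12b_p1b2_p21b_iff σ b).mp hα).1
    ext i : 3
    · rfl
    · simp [← hbar]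
  right_inv := by
    rintro ⟨⟨j, σ⟩, h⟩
    ext : 3
    · simp [Fin.card_filter_val_lt]
      omega
    · rfl

theorem Fin.card_perm_prefix_iff_top {n j : ℕ} (hj : j ≤ n) :
    Nat.card {σ : Equiv.Perm (Fin n) // ∀ i : Fin n, i.val < j ↔ n - j ≤ (σ i).val} =
      j ! * (n - j)! := by
  have hprefix : Nat.card {i : Fin n // i.val < j} = j := by
    rw [Nat.card_eq_fintype_card, Fintype.card_subtype, Fin.card_filter_val_lt, min_eq_right hj]
  have hsuffix : Nat.card {i : Fin n // ¬ i.val < j} = n - j := by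
    rw [Nat.card_eq_fintype_card, Fintype.card_subtype_compl, Fintype.card_fin,
      ← Nat.card_eq_fintype_card, hprefix]
  have htop : Nat.card {i : Fin n // n - j ≤ i.val} = j := by
    rw [Nat.card_eq_fintype_card, Fintype.card_subtype, Fin.card_filter_le_val]
    omega
  rw [Equiv.Perm.card_subtype_forall_iff_apply (hprefix.trans htop.symm), hprefix, hsuffix]

theorem Nat.sum_factorial_mul_factorial_eq (n : ℕ) :
    (∑ j ∈ range (n + 1), (j ! * (n - j)! : ℚ)) =
      n ! * ∑ j ∈ range (n + 1), ((n.choose j : ℚ))⁻¹ := by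
  rw [mul_sum]
  refine sum_congr rfl fun j hj => ?_
  rw [Nat.cast_choose ℚ (Nat.lt_succ_iff.mp (mem_range.mp hj))]
  field_simp

/-- b_n(T₁₀) with T₁₀ = {12̄,1̄2,21̄} equals Σ_{j=0}^n j!(n-j)!, and equivalently
n!·Σ_{j=0}^n C(n,j)⁻¹. -/
theorem stmt12 (n : ℕ) :
    bn n {p12b, p1b2, p21b} = ∑ j ∈ Finset.range (n + 1), Nat.factorial j * Nat.factorial (n - j) ∧
    (bn n {p12b, p1b2, p21b} : ℚ) =
      (Nat.factorial n : ℚ) * ∑ j ∈ Finset.range (n + 1), ((Nat.choose n j : ℚ))⁻¹ := by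
  have hcount : bn n {p12b, p1b2, p21b} = ∑ j ∈ range (n + 1), j ! * (n - j)! := by
    rw [bn, Nat.card_congr ((avoidsAllEquivPrefixPerm n).trans
        (Equiv.subtypeProdEquivSigmaSubtype fun (j : Fin (n + 1)) (σ : Equiv.Perm (Fin n)) =>
          ∀ i : Fin n, i.val < j ↔ n - j ≤ (σ i).val)),
      Nat.card_sigma, ← Fin.sum_univ_eq_sum_range]
    exact sum_congr rfl fun j _ => Fin.card_perm_prefix_iff_top (Nat.lt_succ_iff.mp j.isLt)
  refine ⟨hcount, ?_⟩
  rw [hcount]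
  exact_mod_cast Nat.sum_factorial_mul_factorial_eq n
end

section
/- For every natural number n ≥ 3: b_n(V_2) = b_n(V_7) = b_n(V_8) = 0 where V_2 = {12, 12̄, 1̄2, 1̄2̄, 21, 2̄1̄}, V_7 = {12, 12̄, 1̄2̄, 21, 21̄, 2̄1̄}, and V_8 = {12, 12̄, 1̄2̄, 21, 2̄1, 2̄1̄}; b_n(V_1) = b_n(V_3) = b_n(V_5) = b_n(V_6) = 2 where V_1 = {12, 12̄, 1̄2, 1̄2̄, 21, 21̄}, V_3 = {12, 12̄, 1̄2, 1̄2̄, 21̄, 2̄1}, V_5 = {12, 12̄, 1̄2, 21, 21̄, 2̄1̄}, and V_6 = {12, 12̄, 1̄2, 21̄, 2̄1, 2̄1̄}; and b_n(V_4) = n! where V_4 = {12, 12̄, 1̄2, 21, 21̄, 2̄1}. -/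
section Helpers

lemma perm_strictMono_eq_refl {n : ℕ} (σ : Equiv.Perm (Fin n)) (h : StrictMono ⇑σ) :
    σ = Equiv.refl (Fin n) := by
  have h1 : ⇑(StrictMono.orderIsoOfSurjective ⇑σ h σ.surjective) = ⇑σ :=
    StrictMono.coe_orderIsoOfSurjective ⇑σ h σ.surjective
  have h2 : StrictMono.orderIsoOfSurjective ⇑σ h σ.surjective = OrderIso.refl (Fin n) :=
    Subsingleton.elim _ _
  rw [h2] at h1
  exact Equiv.ext fun x => ((congrFun h1 x).symm : σ x = _)

lemma perm_eq_of_pairwise {n : ℕ} (σ τ : Equiv.Perm (Fin n))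
    (h : ∀ i j : Fin n, i < j → (σ i < σ j ↔ τ i < τ j)) : σ = τ := by
  have hs : StrictMono ⇑(τ.symm.trans σ) := by
    intro i j hij
    simp only [Equiv.trans_apply]
    set a := τ.symm i with ha
    set b := τ.symm j with hb
    have hab : a ≠ b := τ.symm.injective.ne (ne_of_lt hij)
    have hτ : τ a < τ b := by
      rw [ha, hb, Equiv.apply_symm_apply, Equiv.apply_symm_apply]; exact hij
    rcases lt_or_gt_of_ne hab with hl | hl
    · exact (h a b hl).mpr hτ
    · rcases lt_or_gt_of_ne (σ.injective.ne hab) with h2 | h2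
      · exact h2
      · exact absurd ((h b a hl).mp h2) (asymm hτ)
  have key := perm_strictMono_eq_refl _ hs
  refine Equiv.ext fun x => ?_
  have := congrArg (fun e : Equiv.Perm (Fin n) => e (τ x)) key
  simpa using this

lemma contains_refl_iff {n : ℕ} (α : SignedPerm n) (b0 b1 : Bool) :
    SPContains α (Equiv.refl (Fin 2), ![b0, b1]) ↔
      ∃ i j : Fin n, i < j ∧ α.1 i < α.1 j ∧ α.2 i = b0 ∧ α.2 j = b1 := by
  constructor
  · rintro ⟨f, hf, ho, hb⟩
    exact ⟨f 0, f 1, hf (by decide), (ho 0 1).mp (by exact (by decide : (0:Fin 2) < 1)),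
      by simpa using hb 0, by simpa using hb 1⟩
  · rintro ⟨i, j, hij, hv, h0, h1⟩
    refine ⟨![i, j], ?_, ?_, ?_⟩
    · intro p q hpq
      fin_cases p <;> fin_cases q <;>
        first
        | exact absurd hpq (by decide)
        | simpa using hij
    · intro p q
      fin_cases p <;> fin_cases q <;>
        simp [Equiv.refl_apply, hv, lt_asymm hv]
    · intro p; fin_cases p <;> simpa using ‹_›

lemma contains_swap_iff {n : ℕ} (α : SignedPerm n) (b0 b1 : Bool) :
    SPContains α (Equiv.swap 0 1, ![b0, b1]) ↔
      ∃ i j : Fin n, i < j ∧ α.1 j < α.1 i ∧ α.2 i = b0 ∧ α.2 j = b1 := by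
  constructor
  · rintro ⟨f, hf, ho, hb⟩
    exact ⟨f 0, f 1, hf (by decide), (ho 1 0).mp (by exact (by decide : (0:Fin 2) < 1)),
      by simpa using hb 0, by simpa using hb 1⟩
  · rintro ⟨i, j, hij, hv, h0, h1⟩
    refine ⟨![i, j], ?_, ?_, ?_⟩
    · intro p q hpq
      fin_cases p <;> fin_cases q <;>
        first
        | exact absurd hpq (by decide)
        | simpa using hij
    · intro p q
      fin_cases p <;> fin_cases q <;>
        simp [Equiv.swap_apply_left, Equiv.swap_apply_right, hv, lt_asymm hv]
    · intro p; fin_cases p <;> simpa using ‹_›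

lemma c12 {n : ℕ} (α : SignedPerm n) : SPContains α p12 ↔
    ∃ i j : Fin n, i < j ∧ α.1 i < α.1 j ∧ α.2 i = false ∧ α.2 j = false :=
  contains_refl_iff α false false

lemma c12b {n : ℕ} (α : SignedPerm n) : SPContains α p12b ↔
    ∃ i j : Fin n, i < j ∧ α.1 i < α.1 j ∧ α.2 i = false ∧ α.2 j = true :=
  contains_refl_iff α false true

lemma c1b2 {n : ℕ} (α : SignedPerm n) : SPContains α p1b2 ↔
    ∃ i j : Fin n, i < j ∧ α.1 i < α.1 j ∧ α.2 i = true ∧ α.2 j = false :=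
  contains_refl_iff α true false

lemma c1b2b {n : ℕ} (α : SignedPerm n) : SPContains α p1b2b ↔
    ∃ i j : Fin n, i < j ∧ α.1 i < α.1 j ∧ α.2 i = true ∧ α.2 j = true :=
  contains_refl_iff α true true

lemma c21 {n : ℕ} (α : SignedPerm n) : SPContains α p21 ↔
    ∃ i j : Fin n, i < j ∧ α.1 j < α.1 i ∧ α.2 i = false ∧ α.2 j = false :=
  contains_swap_iff α false false

lemma c21b {n : ℕ} (α : SignedPerm n) : SPContains α p21b ↔
    ∃ i j : Fin n, i < j ∧ α.1 j < α.1 i ∧ α.2 i = false ∧ α.2 j = true :=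
  contains_swap_iff α false true

lemma c2b1 {n : ℕ} (α : SignedPerm n) : SPContains α p2b1 ↔
    ∃ i j : Fin n, i < j ∧ α.1 j < α.1 i ∧ α.2 i = true ∧ α.2 j = false :=
  contains_swap_iff α true false

lemma c2b1b {n : ℕ} (α : SignedPerm n) : SPContains α p2b1b ↔
    ∃ i j : Fin n, i < j ∧ α.1 j < α.1 i ∧ α.2 i = true ∧ α.2 j = true :=
  contains_swap_iff α true true

lemma order_cases {n : ℕ} (α : SignedPerm n) {i j : Fin n} (hij : i < j) :
    α.1 i < α.1 j ∨ α.1 j < α.1 i :=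
  lt_or_gt_of_ne (α.1.injective.ne (ne_of_lt hij))

/-- three positions can't have pairwise distinct booleans -/
lemma no_pairwise_ne {n : ℕ} (hn : 3 ≤ n) (b : Fin n → Bool)
    (h : ∀ i j : Fin n, i < j → b i ≠ b j) : False := by
  set i0 : Fin n := ⟨0, by omega⟩
  set i1 : Fin n := ⟨1, by omega⟩
  set i2 : Fin n := ⟨2, by omega⟩
  have h01 := h i0 i1 (by simp [i0, i1, Fin.lt_def])
  have h02 := h i0 i2 (by simp [i0, i2, Fin.lt_def])
  have h12 := h i1 i2 (by simp [i1, i2, Fin.lt_def])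
  rcases Bool.eq_false_or_eq_true (b i0) with h0 | h0 <;>
    rcases Bool.eq_false_or_eq_true (b i1) with h1 | h1 <;>
    rcases Bool.eq_false_or_eq_true (b i2) with h2 | h2 <;>
    simp_all

end Helpers
section Keys

lemma keyV2 {n : ℕ} {α : SignedPerm n}
    (h : AvoidsAll {p12, p12b, p1b2, p1b2b, p21, p2b1b} α) :
    ∀ i j : Fin n, i < j → α.2 i ≠ α.2 j := by
  intro i j hij heq
  rcases order_cases α hij with hv | hv
  · rcases Bool.eq_false_or_eq_true (α.2 i) with h0 | h0 <;>
      rcases Bool.eq_false_or_eq_true (α.2 j) with h1 | h1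
    · exact h p1b2b (by tauto) ((c1b2b α).mpr ⟨i, j, hij, hv, h0, h1⟩)
    · exact h p1b2 (by tauto) ((c1b2 α).mpr ⟨i, j, hij, hv, h0, h1⟩)
    · exact h p12b (by tauto) ((c12b α).mpr ⟨i, j, hij, hv, h0, h1⟩)
    · exact h p12 (by tauto) ((c12 α).mpr ⟨i, j, hij, hv, h0, h1⟩)
  · rcases Bool.eq_false_or_eq_true (α.2 i) with h0 | h0 <;>
      rcases Bool.eq_false_or_eq_true (α.2 j) with h1 | h1
    · exact h p2b1b (by tauto) ((c2b1b α).mpr ⟨i, j, hij, hv, h0, h1⟩)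
    · simp_all
    · simp_all
    · exact h p21 (by tauto) ((c21 α).mpr ⟨i, j, hij, hv, h0, h1⟩)

end Keys
lemma keyV7 {n : ℕ} {α : SignedPerm n}
    (h : AvoidsAll {p12, p12b, p1b2b, p21, p21b, p2b1b} α) :
    ∀ i j : Fin n, i < j → α.2 i = true ∧ α.2 j = false := by
  intro i j hij
  rcases order_cases α hij with hv | hv <;>
    rcases Bool.eq_false_or_eq_true (α.2 i) with h0 | h0 <;>
    rcases Bool.eq_false_or_eq_true (α.2 j) with h1 | h1
  · exact (h p1b2b (by tauto) ((c1b2b α).mpr ⟨i, j, hij, hv, h0, h1⟩)).elim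
  · exact ⟨h0, h1⟩
  · exact (h p12b (by tauto) ((c12b α).mpr ⟨i, j, hij, hv, h0, h1⟩)).elim
  · exact (h p12 (by tauto) ((c12 α).mpr ⟨i, j, hij, hv, h0, h1⟩)).elim
  · exact (h p2b1b (by tauto) ((c2b1b α).mpr ⟨i, j, hij, hv, h0, h1⟩)).elim
  · exact ⟨h0, h1⟩
  · exact (h p21b (by tauto) ((c21b α).mpr ⟨i, j, hij, hv, h0, h1⟩)).elim
  · exact (h p21 (by tauto) ((c21 α).mpr ⟨i, j, hij, hv, h0, h1⟩)).elim

lemma keyV8 {n : ℕ} {α : SignedPerm n}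
    (h : AvoidsAll {p12, p12b, p1b2b, p21, p2b1, p2b1b} α) :
    ∀ i j : Fin n, i < j → α.2 i ≠ α.2 j := by
  intro i j hij heq
  rcases order_cases α hij with hv | hv <;>
    rcases Bool.eq_false_or_eq_true (α.2 i) with h0 | h0 <;>
    rcases Bool.eq_false_or_eq_true (α.2 j) with h1 | h1
  · exact h p1b2b (by tauto) ((c1b2b α).mpr ⟨i, j, hij, hv, h0, h1⟩)
  · simp_all
  · simp_all
  · exact h p12 (by tauto) ((c12 α).mpr ⟨i, j, hij, hv, h0, h1⟩)
  · exact h p2b1b (by tauto) ((c2b1b α).mpr ⟨i, j, hij, hv, h0, h1⟩)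
  · exact h p2b1 (by tauto) ((c2b1 α).mpr ⟨i, j, hij, hv, h0, h1⟩)
  · simp_all
  · exact h p21 (by tauto) ((c21 α).mpr ⟨i, j, hij, hv, h0, h1⟩)

lemma keyV1 {n : ℕ} {α : SignedPerm n}
    (h : AvoidsAll {p12, p12b, p1b2, p1b2b, p21, p21b} α) :
    ∀ i j : Fin n, i < j → α.1 j < α.1 i ∧ α.2 i = true := by
  intro i j hij
  rcases order_cases α hij with hv | hv <;>
    rcases Bool.eq_false_or_eq_true (α.2 i) with h0 | h0 <;>
    rcases Bool.eq_false_or_eq_true (α.2 j) with h1 | h1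
  · exact (h p1b2b (by tauto) ((c1b2b α).mpr ⟨i, j, hij, hv, h0, h1⟩)).elim
  · exact (h p1b2 (by tauto) ((c1b2 α).mpr ⟨i, j, hij, hv, h0, h1⟩)).elim
  · exact (h p12b (by tauto) ((c12b α).mpr ⟨i, j, hij, hv, h0, h1⟩)).elim
  · exact (h p12 (by tauto) ((c12 α).mpr ⟨i, j, hij, hv, h0, h1⟩)).elim
  · exact ⟨hv, h0⟩
  · exact ⟨hv, h0⟩
  · exact (h p21b (by tauto) ((c21b α).mpr ⟨i, j, hij, hv, h0, h1⟩)).elim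
  · exact (h p21 (by tauto) ((c21 α).mpr ⟨i, j, hij, hv, h0, h1⟩)).elim

lemma keyV3 {n : ℕ} {α : SignedPerm n}
    (h : AvoidsAll {p12, p12b, p1b2, p1b2b, p21b, p2b1} α) :
    ∀ i j : Fin n, i < j → α.1 j < α.1 i ∧ α.2 i = α.2 j := by
  intro i j hij
  rcases order_cases α hij with hv | hv <;>
    rcases Bool.eq_false_or_eq_true (α.2 i) with h0 | h0 <;>
    rcases Bool.eq_false_or_eq_true (α.2 j) with h1 | h1
  · exact (h p1b2b (by tauto) ((c1b2b α).mpr ⟨i, j, hij, hv, h0, h1⟩)).elim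
  · exact (h p1b2 (by tauto) ((c1b2 α).mpr ⟨i, j, hij, hv, h0, h1⟩)).elim
  · exact (h p12b (by tauto) ((c12b α).mpr ⟨i, j, hij, hv, h0, h1⟩)).elim
  · exact (h p12 (by tauto) ((c12 α).mpr ⟨i, j, hij, hv, h0, h1⟩)).elim
  · exact ⟨hv, h0.trans h1.symm⟩
  · exact (h p2b1 (by tauto) ((c2b1 α).mpr ⟨i, j, hij, hv, h0, h1⟩)).elim
  · exact (h p21b (by tauto) ((c21b α).mpr ⟨i, j, hij, hv, h0, h1⟩)).elim
  · exact ⟨hv, h0.trans h1.symm⟩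

lemma keyV5 {n : ℕ} {α : SignedPerm n}
    (h : AvoidsAll {p12, p12b, p1b2, p21, p21b, p2b1b} α) :
    ∀ i j : Fin n, i < j → α.2 i = true ∧ (α.1 i < α.1 j ↔ α.2 j = true) := by
  intro i j hij
  rcases order_cases α hij with hv | hv <;>
    rcases Bool.eq_false_or_eq_true (α.2 i) with h0 | h0 <;>
    rcases Bool.eq_false_or_eq_true (α.2 j) with h1 | h1
  · exact ⟨h0, iff_of_true hv h1⟩
  · exact (h p1b2 (by tauto) ((c1b2 α).mpr ⟨i, j, hij, hv, h0, h1⟩)).elim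
  · exact (h p12b (by tauto) ((c12b α).mpr ⟨i, j, hij, hv, h0, h1⟩)).elim
  · exact (h p12 (by tauto) ((c12 α).mpr ⟨i, j, hij, hv, h0, h1⟩)).elim
  · exact (h p2b1b (by tauto) ((c2b1b α).mpr ⟨i, j, hij, hv, h0, h1⟩)).elim
  · exact ⟨h0, iff_of_false (asymm hv) (by simp [h1])⟩
  · exact (h p21b (by tauto) ((c21b α).mpr ⟨i, j, hij, hv, h0, h1⟩)).elim
  · exact (h p21 (by tauto) ((c21 α).mpr ⟨i, j, hij, hv, h0, h1⟩)).elim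

lemma keyV6 {n : ℕ} {α : SignedPerm n}
    (h : AvoidsAll {p12, p12b, p1b2, p21b, p2b1, p2b1b} α) :
    ∀ i j : Fin n, i < j → α.2 i = α.2 j ∧ (α.1 i < α.1 j ↔ α.2 i = true) := by
  intro i j hij
  rcases order_cases α hij with hv | hv <;>
    rcases Bool.eq_false_or_eq_true (α.2 i) with h0 | h0 <;>
    rcases Bool.eq_false_or_eq_true (α.2 j) with h1 | h1
  · exact ⟨h0.trans h1.symm, iff_of_true hv h0⟩
  · exact (h p1b2 (by tauto) ((c1b2 α).mpr ⟨i, j, hij, hv, h0, h1⟩)).elim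
  · exact (h p12b (by tauto) ((c12b α).mpr ⟨i, j, hij, hv, h0, h1⟩)).elim
  · exact (h p12 (by tauto) ((c12 α).mpr ⟨i, j, hij, hv, h0, h1⟩)).elim
  · exact (h p2b1b (by tauto) ((c2b1b α).mpr ⟨i, j, hij, hv, h0, h1⟩)).elim
  · exact (h p2b1 (by tauto) ((c2b1 α).mpr ⟨i, j, hij, hv, h0, h1⟩)).elim
  · exact (h p21b (by tauto) ((c21b α).mpr ⟨i, j, hij, hv, h0, h1⟩)).elim
  · exact ⟨h0.trans h1.symm, iff_of_false (asymm hv) (by simp [h0])⟩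

lemma keyV4 {n : ℕ} {α : SignedPerm n}
    (h : AvoidsAll {p12, p12b, p1b2, p21, p21b, p2b1} α) :
    ∀ i j : Fin n, i < j → α.2 i = true ∧ α.2 j = true := by
  intro i j hij
  rcases order_cases α hij with hv | hv <;>
    rcases Bool.eq_false_or_eq_true (α.2 i) with h0 | h0 <;>
    rcases Bool.eq_false_or_eq_true (α.2 j) with h1 | h1
  · exact ⟨h0, h1⟩
  · exact (h p1b2 (by tauto) ((c1b2 α).mpr ⟨i, j, hij, hv, h0, h1⟩)).elim
  · exact (h p12b (by tauto) ((c12b α).mpr ⟨i, j, hij, hv, h0, h1⟩)).elim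
  · exact (h p12 (by tauto) ((c12 α).mpr ⟨i, j, hij, hv, h0, h1⟩)).elim
  · exact ⟨h0, h1⟩
  · exact (h p2b1 (by tauto) ((c2b1 α).mpr ⟨i, j, hij, hv, h0, h1⟩)).elim
  · exact (h p21b (by tauto) ((c21b α).mpr ⟨i, j, hij, hv, h0, h1⟩)).elim
  · exact (h p21 (by tauto) ((c21 α).mpr ⟨i, j, hij, hv, h0, h1⟩)).elim
section Avoiders

lemma rot_val {m : ℕ} (i : Fin (m+1)) (h : i.1 + 1 < m + 1) :
    (finRotate (m+1) i).1 = i.1 + 1 := by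
  rw [finRotate_succ_apply]
  exact Fin.val_add_one_of_lt (by rw [Fin.lt_def, Fin.val_last]; omega)

lemma rot_last {m : ℕ} (j : Fin (m+1)) (h : ¬ j.1 + 1 < m + 1) :
    finRotate (m+1) j = 0 := by
  have : j = Fin.last m := Fin.ext (by have := j.2; simp [Fin.val_last]; omega)
  rw [this, finRotate_last]

lemma avoidV1_x {n : ℕ} :
    AvoidsAll {p12, p12b, p1b2, p1b2b, p21, p21b}
      ((Fin.revPerm, fun _ => true) : SignedPerm n) := by
  intro τ hτ
  simp only [Set.mem_insert_iff, Set.mem_singleton_iff] at hτ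
  rcases hτ with rfl | rfl | rfl | rfl | rfl | rfl <;> intro hc
  · obtain ⟨i, j, hij, hv, h0, h1⟩ := (c12 _).mp hc
    exact absurd ((Fin.rev_lt_rev).mp (by simpa [Fin.revPerm_apply] using hv)) (asymm hij)
  · obtain ⟨i, j, hij, hv, h0, h1⟩ := (c12b _).mp hc
    exact absurd ((Fin.rev_lt_rev).mp (by simpa [Fin.revPerm_apply] using hv)) (asymm hij)
  · obtain ⟨i, j, hij, hv, h0, h1⟩ := (c1b2 _).mp hc
    exact absurd ((Fin.rev_lt_rev).mp (by simpa [Fin.revPerm_apply] using hv)) (asymm hij)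
  · obtain ⟨i, j, hij, hv, h0, h1⟩ := (c1b2b _).mp hc
    exact absurd ((Fin.rev_lt_rev).mp (by simpa [Fin.revPerm_apply] using hv)) (asymm hij)
  · obtain ⟨i, j, hij, hv, h0, h1⟩ := (c21 _).mp hc
    simp at h0
  · obtain ⟨i, j, hij, hv, h0, h1⟩ := (c21b _).mp hc
    simp at h0

lemma avoidV1_y {n : ℕ} :
    AvoidsAll {p12, p12b, p1b2, p1b2b, p21, p21b}
      ((Fin.revPerm, fun i => decide (i.1 + 1 < n)) : SignedPerm n) := by
  intro τ hτ
  simp only [Set.mem_insert_iff, Set.mem_singleton_iff] at hτ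
  rcases hτ with rfl | rfl | rfl | rfl | rfl | rfl <;> intro hc
  · obtain ⟨i, j, hij, hv, h0, h1⟩ := (c12 _).mp hc
    exact absurd ((Fin.rev_lt_rev).mp (by simpa [Fin.revPerm_apply] using hv)) (asymm hij)
  · obtain ⟨i, j, hij, hv, h0, h1⟩ := (c12b _).mp hc
    exact absurd ((Fin.rev_lt_rev).mp (by simpa [Fin.revPerm_apply] using hv)) (asymm hij)
  · obtain ⟨i, j, hij, hv, h0, h1⟩ := (c1b2 _).mp hc
    exact absurd ((Fin.rev_lt_rev).mp (by simpa [Fin.revPerm_apply] using hv)) (asymm hij)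
  · obtain ⟨i, j, hij, hv, h0, h1⟩ := (c1b2b _).mp hc
    exact absurd ((Fin.rev_lt_rev).mp (by simpa [Fin.revPerm_apply] using hv)) (asymm hij)
  · obtain ⟨i, j, hij, hv, h0, h1⟩ := (c21 _).mp hc
    simp only [decide_eq_false_iff_not, not_lt] at h0
    have := j.2; rw [Fin.lt_def] at hij; omega
  · obtain ⟨i, j, hij, hv, h0, h1⟩ := (c21b _).mp hc
    simp only [decide_eq_false_iff_not, not_lt] at h0
    have := j.2; rw [Fin.lt_def] at hij; omega

lemma avoidV3 {n : ℕ} (b : Bool) :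
    AvoidsAll {p12, p12b, p1b2, p1b2b, p21b, p2b1}
      ((Fin.revPerm, fun _ => b) : SignedPerm n) := by
  intro τ hτ
  simp only [Set.mem_insert_iff, Set.mem_singleton_iff] at hτ
  rcases hτ with rfl | rfl | rfl | rfl | rfl | rfl <;> intro hc
  · obtain ⟨i, j, hij, hv, h0, h1⟩ := (c12 _).mp hc
    exact absurd ((Fin.rev_lt_rev).mp (by simpa [Fin.revPerm_apply] using hv)) (asymm hij)
  · obtain ⟨i, j, hij, hv, h0, h1⟩ := (c12b _).mp hc
    exact absurd ((Fin.rev_lt_rev).mp (by simpa [Fin.revPerm_apply] using hv)) (asymm hij)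
  · obtain ⟨i, j, hij, hv, h0, h1⟩ := (c1b2 _).mp hc
    exact absurd ((Fin.rev_lt_rev).mp (by simpa [Fin.revPerm_apply] using hv)) (asymm hij)
  · obtain ⟨i, j, hij, hv, h0, h1⟩ := (c1b2b _).mp hc
    exact absurd ((Fin.rev_lt_rev).mp (by simpa [Fin.revPerm_apply] using hv)) (asymm hij)
  · obtain ⟨i, j, hij, hv, h0, h1⟩ := (c21b _).mp hc
    simp_all
  · obtain ⟨i, j, hij, hv, h0, h1⟩ := (c2b1 _).mp hc
    simp_all

lemma avoidV5_x {n : ℕ} :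
    AvoidsAll {p12, p12b, p1b2, p21, p21b, p2b1b}
      ((Equiv.refl (Fin n), fun _ => true) : SignedPerm n) := by
  intro τ hτ
  simp only [Set.mem_insert_iff, Set.mem_singleton_iff] at hτ
  rcases hτ with rfl | rfl | rfl | rfl | rfl | rfl <;> intro hc
  · obtain ⟨i, j, hij, hv, h0, h1⟩ := (c12 _).mp hc
    simp at h0
  · obtain ⟨i, j, hij, hv, h0, h1⟩ := (c12b _).mp hc
    simp at h0
  · obtain ⟨i, j, hij, hv, h0, h1⟩ := (c1b2 _).mp hc
    simp at h1
  · obtain ⟨i, j, hij, hv, h0, h1⟩ := (c21 _).mp hc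
    exact absurd (by simpa using hv) (asymm hij)
  · obtain ⟨i, j, hij, hv, h0, h1⟩ := (c21b _).mp hc
    exact absurd (by simpa using hv) (asymm hij)
  · obtain ⟨i, j, hij, hv, h0, h1⟩ := (c2b1b _).mp hc
    exact absurd (by simpa using hv) (asymm hij)

lemma avoidV5_y {m : ℕ} :
    AvoidsAll {p12, p12b, p1b2, p21, p21b, p2b1b}
      ((finRotate (m+1), fun i => decide (i.1 + 1 < m + 1)) : SignedPerm (m+1)) := by
  intro τ hτ
  simp only [Set.mem_insert_iff, Set.mem_singleton_iff] at hτ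
  rcases hτ with rfl | rfl | rfl | rfl | rfl | rfl <;> intro hc
  · obtain ⟨i, j, hij, hv, h0, h1⟩ := (c12 _).mp hc
    simp only [decide_eq_false_iff_not, not_lt] at h0
    have := j.2; rw [Fin.lt_def] at hij; omega
  · obtain ⟨i, j, hij, hv, h0, h1⟩ := (c12b _).mp hc
    simp only [decide_eq_false_iff_not, not_lt] at h0
    have := j.2; rw [Fin.lt_def] at hij; omega
  · obtain ⟨i, j, hij, hv, h0, h1⟩ := (c1b2 _).mp hc
    simp only [decide_eq_false_iff_not, not_lt] at h1
    rw [rot_last j (by omega)] at hv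
    exact absurd hv (Fin.not_lt_zero _)
  · obtain ⟨i, j, hij, hv, h0, h1⟩ := (c21 _).mp hc
    simp only [decide_eq_false_iff_not, not_lt] at h0
    have := j.2; rw [Fin.lt_def] at hij; omega
  · obtain ⟨i, j, hij, hv, h0, h1⟩ := (c21b _).mp hc
    simp only [decide_eq_false_iff_not, not_lt] at h0
    have := j.2; rw [Fin.lt_def] at hij; omega
  · obtain ⟨i, j, hij, hv, h0, h1⟩ := (c2b1b _).mp hc
    simp only [decide_eq_true_eq] at h1
    rw [Fin.lt_def] at hij hv
    rw [rot_val j h1, rot_val i (by omega)] at hv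
    omega

lemma avoidV6_x {n : ℕ} :
    AvoidsAll {p12, p12b, p1b2, p21b, p2b1, p2b1b}
      ((Equiv.refl (Fin n), fun _ => true) : SignedPerm n) := by
  intro τ hτ
  simp only [Set.mem_insert_iff, Set.mem_singleton_iff] at hτ
  rcases hτ with rfl | rfl | rfl | rfl | rfl | rfl <;> intro hc
  · obtain ⟨i, j, hij, hv, h0, h1⟩ := (c12 _).mp hc
    simp at h0
  · obtain ⟨i, j, hij, hv, h0, h1⟩ := (c12b _).mp hc
    simp at h0
  · obtain ⟨i, j, hij, hv, h0, h1⟩ := (c1b2 _).mp hc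
    simp at h1
  · obtain ⟨i, j, hij, hv, h0, h1⟩ := (c21b _).mp hc
    exact absurd (by simpa using hv) (asymm hij)
  · obtain ⟨i, j, hij, hv, h0, h1⟩ := (c2b1 _).mp hc
    exact absurd (by simpa using hv) (asymm hij)
  · obtain ⟨i, j, hij, hv, h0, h1⟩ := (c2b1b _).mp hc
    exact absurd (by simpa using hv) (asymm hij)

lemma avoidV6_y {n : ℕ} :
    AvoidsAll {p12, p12b, p1b2, p21b, p2b1, p2b1b}
      ((Fin.revPerm, fun _ => false) : SignedPerm n) := by
  intro τ hτ
  simp only [Set.mem_insert_iff, Set.mem_singleton_iff] at hτ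
  rcases hτ with rfl | rfl | rfl | rfl | rfl | rfl <;> intro hc
  · obtain ⟨i, j, hij, hv, h0, h1⟩ := (c12 _).mp hc
    exact absurd ((Fin.rev_lt_rev).mp (by simpa [Fin.revPerm_apply] using hv)) (asymm hij)
  · obtain ⟨i, j, hij, hv, h0, h1⟩ := (c12b _).mp hc
    exact absurd ((Fin.rev_lt_rev).mp (by simpa [Fin.revPerm_apply] using hv)) (asymm hij)
  · obtain ⟨i, j, hij, hv, h0, h1⟩ := (c1b2 _).mp hc
    exact absurd ((Fin.rev_lt_rev).mp (by simpa [Fin.revPerm_apply] using hv)) (asymm hij)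
  · obtain ⟨i, j, hij, hv, h0, h1⟩ := (c21b _).mp hc
    simp at h1
  · obtain ⟨i, j, hij, hv, h0, h1⟩ := (c2b1 _).mp hc
    simp at h0
  · obtain ⟨i, j, hij, hv, h0, h1⟩ := (c2b1b _).mp hc
    simp at h0

lemma avoidV4 {n : ℕ} (σ : Equiv.Perm (Fin n)) :
    AvoidsAll {p12, p12b, p1b2, p21, p21b, p2b1}
      ((σ, fun _ => true) : SignedPerm n) := by
  intro τ hτ
  simp only [Set.mem_insert_iff, Set.mem_singleton_iff] at hτ
  rcases hτ with rfl | rfl | rfl | rfl | rfl | rfl <;> intro hc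
  · obtain ⟨i, j, hij, hv, h0, h1⟩ := (c12 _).mp hc; simp at h0
  · obtain ⟨i, j, hij, hv, h0, h1⟩ := (c12b _).mp hc; simp at h0
  · obtain ⟨i, j, hij, hv, h0, h1⟩ := (c1b2 _).mp hc; simp at h1
  · obtain ⟨i, j, hij, hv, h0, h1⟩ := (c21 _).mp hc; simp at h0
  · obtain ⟨i, j, hij, hv, h0, h1⟩ := (c21b _).mp hc; simp at h0
  · obtain ⟨i, j, hij, hv, h0, h1⟩ := (c2b1 _).mp hc; simp at h1

end Avoiders
section Class

lemma classV1 {n : ℕ} (hn : 3 ≤ n) {α : SignedPerm n}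
    (h : AvoidsAll {p12, p12b, p1b2, p1b2b, p21, p21b} α) :
    α = ((Fin.revPerm, fun _ => true) : SignedPerm n) ∨
    α = ((Fin.revPerm, fun i => decide (i.1 + 1 < n)) : SignedPerm n) := by
  have key := keyV1 h
  have hperm : α.1 = Fin.revPerm :=
    perm_eq_of_pairwise _ _ (fun i j hij =>
      iff_of_false (asymm (key i j hij).1)
        (by simp only [Fin.revPerm_apply, Fin.rev_lt_rev]; exact asymm hij))
  have hbar : ∀ i : Fin n, i.1 + 1 < n → α.2 i = true := by
    intro i hi
    exact (key i ⟨n-1, by omega⟩ (by rw [Fin.lt_def]; dsimp; omega)).2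
  rcases Bool.eq_false_or_eq_true (α.2 ⟨n-1, by omega⟩) with hl | hl
  · left
    refine Prod.ext hperm (funext fun i => ?_)
    by_cases hi : i.1 + 1 < n
    · exact hbar i hi
    · have heq : i = ⟨n-1, by omega⟩ := Fin.ext (by have := i.2; dsimp; omega)
      rw [heq, hl]
  · right
    refine Prod.ext hperm (funext fun i => ?_)
    by_cases hi : i.1 + 1 < n
    · rw [hbar i hi]; simp [hi]
    · have heq : i = ⟨n-1, by omega⟩ := Fin.ext (by have := i.2; dsimp; omega)
      rw [heq, hl]
      have : ¬ ((⟨n-1, by omega⟩ : Fin n).1 + 1 < n) := by dsimp; omega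
      simp [this]

lemma classV3 {n : ℕ} (hn : 3 ≤ n) {α : SignedPerm n}
    (h : AvoidsAll {p12, p12b, p1b2, p1b2b, p21b, p2b1} α) :
    α = ((Fin.revPerm, fun _ => true) : SignedPerm n) ∨
    α = ((Fin.revPerm, fun _ => false) : SignedPerm n) := by
  have key := keyV3 h
  have hperm : α.1 = Fin.revPerm :=
    perm_eq_of_pairwise _ _ (fun i j hij =>
      iff_of_false (asymm (key i j hij).1)
        (by simp only [Fin.revPerm_apply, Fin.rev_lt_rev]; exact asymm hij))
  have hbar : ∀ i : Fin n, α.2 i = α.2 ⟨0, by omega⟩ := by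
    intro i
    rcases Nat.eq_zero_or_pos i.1 with h0 | h0
    · have hi0 : i = ⟨0, by omega⟩ := Fin.ext (by dsimp; omega)
      rw [hi0]
    · exact ((key ⟨0, by omega⟩ i (by rw [Fin.lt_def]; dsimp; omega)).2).symm
  rcases Bool.eq_false_or_eq_true (α.2 ⟨0, by omega⟩) with hl | hl
  · left; exact Prod.ext hperm (funext fun i => (hbar i).trans hl)
  · right; exact Prod.ext hperm (funext fun i => (hbar i).trans hl)

lemma classV6 {n : ℕ} (hn : 3 ≤ n) {α : SignedPerm n}
    (h : AvoidsAll {p12, p12b, p1b2, p21b, p2b1, p2b1b} α) :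
    α = ((Equiv.refl (Fin n), fun _ => true) : SignedPerm n) ∨
    α = ((Fin.revPerm, fun _ => false) : SignedPerm n) := by
  have key := keyV6 h
  have hbar : ∀ i : Fin n, α.2 i = α.2 ⟨0, by omega⟩ := by
    intro i
    rcases Nat.eq_zero_or_pos i.1 with h0 | h0
    · have hi0 : i = ⟨0, by omega⟩ := Fin.ext (by dsimp; omega)
      rw [hi0]
    · exact ((key ⟨0, by omega⟩ i (by rw [Fin.lt_def]; dsimp; omega)).1).symm
  rcases Bool.eq_false_or_eq_true (α.2 ⟨0, by omega⟩) with hl | hl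
  · left
    have hperm : α.1 = Equiv.refl (Fin n) :=
      perm_strictMono_eq_refl _ (fun i j hij =>
        (key i j hij).2.mpr ((hbar i).trans hl))
    exact Prod.ext hperm (funext fun i => (hbar i).trans hl)
  · right
    have hperm : α.1 = Fin.revPerm :=
      perm_eq_of_pairwise _ _ (fun i j hij =>
        iff_of_false
          (fun hc => by
            have := (key i j hij).2.mp hc
            rw [(hbar i).trans hl] at this
            exact Bool.false_ne_true this)
          (by simp only [Fin.revPerm_apply, Fin.rev_lt_rev]; exact asymm hij))
    exact Prod.ext hperm (funext fun i => (hbar i).trans hl)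

lemma classV5 {n : ℕ} (hn : 3 ≤ n) {α : SignedPerm n}
    (h : AvoidsAll {p12, p12b, p1b2, p21, p21b, p2b1b} α) :
    α = ((Equiv.refl (Fin n), fun _ => true) : SignedPerm n) ∨
    α = ((finRotate n, fun i => decide (i.1 + 1 < n)) : SignedPerm n) := by
  obtain ⟨m, rfl⟩ : ∃ m, n = m + 1 := ⟨n - 1, by omega⟩
  have key := keyV5 h
  have hbar : ∀ i : Fin (m+1), i.1 + 1 < m + 1 → α.2 i = true := by
    intro i hi
    exact (key i ⟨m, by omega⟩ (by rw [Fin.lt_def]; dsimp; omega)).1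
  rcases Bool.eq_false_or_eq_true (α.2 ⟨m, by omega⟩) with hl | hl
  · left
    have hbar' : ∀ i : Fin (m+1), α.2 i = true := by
      intro i
      by_cases hi : i.1 + 1 < m + 1
      · exact hbar i hi
      · have heq : i = ⟨m, by omega⟩ := Fin.ext (by have := i.2; dsimp; omega)
        rw [heq]; exact hl
    have hperm : α.1 = Equiv.refl (Fin (m+1)) :=
      perm_strictMono_eq_refl _ (fun i j hij => (key i j hij).2.mpr (hbar' j))
    exact Prod.ext hperm (funext fun i => hbar' i)
  · right
    have hperm : α.1 = finRotate (m+1) := by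
      refine perm_eq_of_pairwise _ _ (fun i j hij => ?_)
      by_cases hj : j.1 + 1 < m + 1
      · refine iff_of_true ((key i j hij).2.mpr (hbar j hj)) ?_
        rw [Fin.lt_def, rot_val j hj, rot_val i (by rw [Fin.lt_def] at hij; omega)]
        rw [Fin.lt_def] at hij; omega
      · have heq : j = ⟨m, by omega⟩ := Fin.ext (by have := j.2; dsimp; omega)
        refine iff_of_false ?_ ?_
        · intro hc
          have := (key i j hij).2.mp hc
          rw [heq, hl] at this
          exact Bool.false_ne_true this
        · rw [rot_last j hj]
          exact Fin.not_lt_zero _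
    refine Prod.ext hperm (funext fun i => ?_)
    by_cases hi : i.1 + 1 < m + 1
    · rw [hbar i hi]; simp [hi]
    · have heq : i = ⟨m, by omega⟩ := Fin.ext (by have := i.2; dsimp; omega)
      rw [heq, hl]
      have : ¬ ((⟨m, by omega⟩ : Fin (m+1)).1 + 1 < m + 1) := by dsimp; omega
      simp [this]

lemma classV4 {n : ℕ} (hn : 3 ≤ n) {α : SignedPerm n}
    (h : AvoidsAll {p12, p12b, p1b2, p21, p21b, p2b1} α) :
    α.2 = fun _ => true := by
  have key := keyV4 h
  funext i
  rcases Nat.eq_zero_or_pos i.1 with h0 | h0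
  · have : i = ⟨0, by omega⟩ := Fin.ext h0
    rw [this]
    exact (key ⟨0, by omega⟩ ⟨1, by omega⟩ (by rw [Fin.lt_def]; dsimp; omega)).1
  · exact (key ⟨0, by omega⟩ i (by rw [Fin.lt_def]; dsimp; omega)).2

end Class

/-- For n ≥ 3: b_n(V₂)=b_n(V₇)=b_n(V₈)=0; b_n(V₁)=b_n(V₃)=b_n(V₅)=b_n(V₆)=2; b_n(V₄)=n!. -/
theorem stmt19 (n : ℕ) (hn : 3 ≤ n) :
    bn n {p12, p12b, p1b2, p1b2b, p21, p2b1b} = 0 ∧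
    bn n {p12, p12b, p1b2b, p21, p21b, p2b1b} = 0 ∧
    bn n {p12, p12b, p1b2b, p21, p2b1, p2b1b} = 0 ∧
    bn n {p12, p12b, p1b2, p1b2b, p21, p21b} = 2 ∧
    bn n {p12, p12b, p1b2, p1b2b, p21b, p2b1} = 2 ∧
    bn n {p12, p12b, p1b2, p21, p21b, p2b1b} = 2 ∧
    bn n {p12, p12b, p1b2, p21b, p2b1, p2b1b} = 2 ∧
    bn n {p12, p12b, p1b2, p21, p21b, p2b1} = Nat.factorial n := by
  refine ⟨?_, ?_, ?_, ?_, ?_, ?_, ?_, ?_⟩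
  · -- V2 = 0
    have : IsEmpty {α : SignedPerm n // AvoidsAll {p12, p12b, p1b2, p1b2b, p21, p2b1b} α} :=
      ⟨fun s => no_pairwise_ne hn s.1.2 (keyV2 s.2)⟩
    exact Nat.card_of_isEmpty
  · -- V7 = 0
    have : IsEmpty {α : SignedPerm n // AvoidsAll {p12, p12b, p1b2b, p21, p21b, p2b1b} α} := by
      refine ⟨fun s => ?_⟩
      have h1 := (keyV7 s.2 ⟨0, by omega⟩ ⟨1, by omega⟩ (by rw [Fin.lt_def]; dsimp; omega)).2
      have h2 := (keyV7 s.2 ⟨1, by omega⟩ ⟨2, by omega⟩ (by rw [Fin.lt_def]; dsimp; omega)).1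
      rw [h1] at h2
      exact Bool.false_ne_true h2
    exact Nat.card_of_isEmpty
  · -- V8 = 0
    have : IsEmpty {α : SignedPerm n // AvoidsAll {p12, p12b, p1b2b, p21, p2b1, p2b1b} α} :=
      ⟨fun s => no_pairwise_ne hn s.1.2 (keyV8 s.2)⟩
    exact Nat.card_of_isEmpty
  · -- V1 = 2
    have hset : {α : SignedPerm n | AvoidsAll {p12, p12b, p1b2, p1b2b, p21, p21b} α} =
        {((Fin.revPerm, fun _ => true) : SignedPerm n),
         ((Fin.revPerm, fun i => decide (i.1 + 1 < n)) : SignedPerm n)} := by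
      ext α
      constructor
      · intro hα
        rcases classV1 hn hα with rfl | rfl
        · exact Set.mem_insert _ _
        · exact Set.mem_insert_of_mem _ rfl
      · rintro (rfl | rfl)
        · exact avoidV1_x
        · exact avoidV1_y
    have hxy : ((Fin.revPerm, fun _ => true) : SignedPerm n) ≠
        ((Fin.revPerm, fun i => decide (i.1 + 1 < n)) : SignedPerm n) := by
      intro hc
      have h1 := congrFun (congrArg Prod.snd hc) ⟨n-1, by omega⟩
      have h2 : n - 1 + 1 = n := by omega
      dsimp at h1
      rw [h2] at h1
      simp at h1
    have : bn n {p12, p12b, p1b2, p1b2b, p21, p21b} =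
        {α : SignedPerm n | AvoidsAll {p12, p12b, p1b2, p1b2b, p21, p21b} α}.ncard :=
      Nat.card_coe_set_eq _
    rw [this, hset]
    exact Set.ncard_pair hxy
  · -- V3 = 2
    have hset : {α : SignedPerm n | AvoidsAll {p12, p12b, p1b2, p1b2b, p21b, p2b1} α} =
        {((Fin.revPerm, fun _ => true) : SignedPerm n),
         ((Fin.revPerm, fun _ => false) : SignedPerm n)} := by
      ext α
      constructor
      · intro hα
        rcases classV3 hn hα with rfl | rfl
        · exact Set.mem_insert _ _
        · exact Set.mem_insert_of_mem _ rfl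
      · rintro (rfl | rfl)
        · exact avoidV3 true
        · exact avoidV3 false
    have hxy : ((Fin.revPerm, fun _ => true) : SignedPerm n) ≠
        ((Fin.revPerm, fun _ => false) : SignedPerm n) := by
      intro hc
      have h1 := congrFun (congrArg Prod.snd hc) ⟨0, by omega⟩
      simp at h1
    have : bn n {p12, p12b, p1b2, p1b2b, p21b, p2b1} =
        {α : SignedPerm n | AvoidsAll {p12, p12b, p1b2, p1b2b, p21b, p2b1} α}.ncard :=
      Nat.card_coe_set_eq _
    rw [this, hset]
    exact Set.ncard_pair hxy
  · -- V5 = 2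
    have hset : {α : SignedPerm n | AvoidsAll {p12, p12b, p1b2, p21, p21b, p2b1b} α} =
        {((Equiv.refl (Fin n), fun _ => true) : SignedPerm n),
         ((finRotate n, fun i => decide (i.1 + 1 < n)) : SignedPerm n)} := by
      ext α
      constructor
      · intro hα
        rcases classV5 hn hα with rfl | rfl
        · exact Set.mem_insert _ _
        · exact Set.mem_insert_of_mem _ rfl
      · rintro (rfl | rfl)
        · exact avoidV5_x
        · obtain ⟨m, rfl⟩ : ∃ m, n = m + 1 := ⟨n - 1, by omega⟩
          exact avoidV5_y
    have hxy : ((Equiv.refl (Fin n), fun _ => true) : SignedPerm n) ≠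
        ((finRotate n, fun i => decide (i.1 + 1 < n)) : SignedPerm n) := by
      intro hc
      have h1 := congrFun (congrArg Prod.snd hc) ⟨n-1, by omega⟩
      have h2 : n - 1 + 1 = n := by omega
      dsimp at h1
      rw [h2] at h1
      simp at h1
    have : bn n {p12, p12b, p1b2, p21, p21b, p2b1b} =
        {α : SignedPerm n | AvoidsAll {p12, p12b, p1b2, p21, p21b, p2b1b} α}.ncard :=
      Nat.card_coe_set_eq _
    rw [this, hset]
    exact Set.ncard_pair hxy
  · -- V6 = 2
    have hset : {α : SignedPerm n | AvoidsAll {p12, p12b, p1b2, p21b, p2b1, p2b1b} α} =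
        {((Equiv.refl (Fin n), fun _ => true) : SignedPerm n),
         ((Fin.revPerm, fun _ => false) : SignedPerm n)} := by
      ext α
      constructor
      · intro hα
        rcases classV6 hn hα with rfl | rfl
        · exact Set.mem_insert _ _
        · exact Set.mem_insert_of_mem _ rfl
      · rintro (rfl | rfl)
        · exact avoidV6_x
        · exact avoidV6_y
    have hxy : ((Equiv.refl (Fin n), fun _ => true) : SignedPerm n) ≠
        ((Fin.revPerm, fun _ => false) : SignedPerm n) := by
      intro hc
      have h1 := congrFun (congrArg Prod.snd hc) ⟨0, by omega⟩
      simp at h1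
    have : bn n {p12, p12b, p1b2, p21b, p2b1, p2b1b} =
        {α : SignedPerm n | AvoidsAll {p12, p12b, p1b2, p21b, p2b1, p2b1b} α}.ncard :=
      Nat.card_coe_set_eq _
    rw [this, hset]
    exact Set.ncard_pair hxy
  · -- V4 = n!
    have e : {α : SignedPerm n // AvoidsAll {p12, p12b, p1b2, p21, p21b, p2b1} α} ≃
        Equiv.Perm (Fin n) :=
      { toFun := fun s => s.1.1
        invFun := fun σ => ⟨(σ, fun _ => true), avoidV4 σ⟩
        left_inv := fun s => Subtype.ext (Prod.ext rfl (classV4 hn s.2).symm)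
        right_inv := fun σ => rfl }
    show Nat.card _ = _
    rw [Nat.card_congr e, Nat.card_eq_fintype_card, Fintype.card_perm, Fintype.card_fin]
end
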